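/- arXiv:2406.18396 — 6 statements merged into one kernel-verified Lean document; each statement's English description precedes it below -/
import Mathlib

section
/- Let α, β be complex numbers. Then |1 + α(λ - 1)| + |β(λ - 1)| ≤ 1 for all complex λ with |λ| ≤ 1 if and only if α is a real number in [0,1] and β = 0. -/
/-!
The map `λ ↦ 1 + α (λ - 1)` sends the closed unit disc onto the closed disc of radius `‖α‖`
about `1 - α`, so the hypothesis forces `‖α‖ + ‖1 - α‖ ≤ 1`; equality in the triangle inequality
then puts `α` on the segment `[0, 1]`. With `α = t` real, testing at the points `λ = 1 - ε² + iε`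
of the disc, which approach `1` tangentially to the circle, gives `‖β‖ ε ≤ t ε²` for all small
`ε`, hence `β = 0`.
-/

open Set

namespace Complex

theorem exists_norm_eq_one_norm_add_mul_eq (z w : ℂ) :
    ∃ u : ℂ, ‖u‖ = 1 ∧ ‖z + w * u‖ = ‖z‖ + ‖w‖ := by
  rcases eq_or_ne z 0 with rfl | hz
  · exact ⟨1, by simp⟩
  rcases eq_or_ne w 0 with rfl | hw
  · exact ⟨1, by simp⟩
  refine ⟨(‖w‖ / ‖z‖ : ℝ) * z / w, ?_, ?_⟩
  · simp [hz, hw]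
  · have : z + w * ((‖w‖ / ‖z‖ : ℝ) * z / w) = ((1 + ‖w‖ / ‖z‖ : ℝ) : ℂ) * z := by
      push_cast; field_simp
    rw [this, norm_mul, norm_real, Real.norm_of_nonneg (by positivity)]
    field_simp

theorem exists_mem_Icc_eq_ofReal_of_norm_add_norm_one_sub_le {z : ℂ}
    (h : ‖z‖ + ‖1 - z‖ ≤ 1) : ∃ t ∈ Icc (0 : ℝ) 1, z = t := by
  have hbtw : Wbtw ℝ 0 z 1 := by
    refine dist_add_dist_eq_iff.mp (le_antisymm ?_ (dist_triangle _ _ _))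
    simpa [dist_eq_norm, norm_sub_rev] using h
  obtain ⟨t, ht, rfl⟩ := hbtw
  exact ⟨t, ht, by simp [AffineMap.lineMap_apply_module]⟩

theorem norm_mk_one_sub_sq_le_one {ε : ℝ} (hε : |ε| ≤ 1) : ‖(⟨1 - ε ^ 2, ε⟩ : ℂ)‖ ≤ 1 := by
  rw [← sq_le_one_iff₀ (norm_nonneg _), Complex.sq_norm, normSq_mk]
  have : ε ^ 2 ≤ 1 := by simpa using sq_le_sq' (abs_le.mp hε).1 (abs_le.mp hε).2
  nlinarith

theorem eq_zero_of_forall_norm_one_add_ofReal_mul_add_norm_mul_le {t : ℝ} (ht : t ≤ 1)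
    {β : ℂ} (h : ∀ u : ℂ, ‖u‖ ≤ 1 → ‖1 + t * (u - 1)‖ + ‖β * (u - 1)‖ ≤ 1) : β = 0 := by
  have hβ_le : ∀ ε : ℝ, 0 < ε → ε ≤ 1 → ‖β‖ ≤ ε := by
    intro ε hε0 hε1
    let u : ℂ := ⟨1 - ε ^ 2, ε⟩
    have hre : 1 - t * ε ^ 2 ≤ ‖1 + t * (u - 1)‖ := by
      convert re_le_norm (1 + t * (u - 1)) using 1
      simp [u]; ring
    have him : ‖β‖ * ε ≤ ‖β * (u - 1)‖ := by
      rw [norm_mul]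
      refine mul_le_mul_of_nonneg_left ?_ (norm_nonneg β)
      simpa [u, abs_of_pos hε0] using abs_im_le_norm (u - 1)
    have := h u (norm_mk_one_sub_sq_le_one (abs_le.mpr ⟨by linarith, hε1⟩))
    have : ‖β‖ * ε ≤ ε * ε := by nlinarith
    exact le_of_mul_le_mul_right this hε0
  refine norm_le_zero_iff.mp (le_of_forall_pos_le_add fun ε hε => ?_)
  simpa using
    (hβ_le (min ε 1) (lt_min hε one_pos) (min_le_right _ _)).trans (min_le_left _ _)

theorem norm_one_add_ofReal_mul_sub_one_le_one {t : ℝ} (ht : t ∈ Icc (0 : ℝ) 1) {u : ℂ}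
    (hu : ‖u‖ ≤ 1) : ‖1 + t * (u - 1)‖ ≤ 1 := by
  rw [show (1 : ℂ) + t * (u - 1) = (1 - t) • (1 : ℂ) + t • u by
    simp only [real_smul]; push_cast; ring, ← mem_closedBall_zero_iff]
  exact convex_closedBall 0 1 (mem_closedBall_zero_iff.mpr norm_one.le)
    (mem_closedBall_zero_iff.mpr hu) (sub_nonneg.mpr ht.2) ht.1 (sub_add_cancel 1 t)

end Complex

theorem stmt1 (α β : ℂ) :
    (∀ lam : ℂ, ‖lam‖ ≤ 1 →
        ‖1 + α * (lam - 1)‖ + ‖β * (lam - 1)‖ ≤ 1) ↔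
      ((∃ t : ℝ, t ∈ Set.Icc (0 : ℝ) 1 ∧ α = (t : ℂ)) ∧ β = 0) := by
  constructor
  · intro h
    obtain ⟨u, hu, hnorm⟩ := Complex.exists_norm_eq_one_norm_add_mul_eq (1 - α) α
    have hα : ‖α‖ + ‖1 - α‖ ≤ 1 := by
      have := h u hu.le
      rw [show 1 + α * (u - 1) = 1 - α + α * u by ring, hnorm] at this
      linarith [norm_nonneg (β * (u - 1))]
    obtain ⟨t, ht, rfl⟩ := Complex.exists_mem_Icc_eq_ofReal_of_norm_add_norm_one_sub_le hα
    exact ⟨⟨t, ht, rfl⟩, Complex.eq_zero_of_forall_norm_one_add_ofReal_mul_add_norm_mul_le ht.2 h⟩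
  · rintro ⟨⟨t, ht, rfl⟩, rfl⟩ lam hlam
    simpa using Complex.norm_one_add_ofReal_mul_sub_one_le_one ht hlam
end

section
/- Let L_{2n} = {z ∈ ℂ^{2n} : ‖z‖ < 1 and 2‖z‖² - |z•z|² < 1} where z•z = z₁² + ⋯ + z_{2n}². The linear map R(z₁,…,z_{2n}) = ((z₁ - i z₂)/2, (z₂ + i z₁)/2, …, (z_{2n-1} - i z_{2n})/2, (z_{2n} + i z_{2n-1})/2) maps L_{2n} into L_{2n} and satisfies R ∘ R = R. -/
noncomputable def lieBall (m : ℕ) : Set (EuclideanSpace ℂ (Fin m)) :=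
  {z | ‖z‖ < 1 ∧ 2 * ‖z‖ ^ 2 - ‖∑ j, z j ^ 2‖ ^ 2 < 1}

noncomputable def lieRetr (n : ℕ) :
    EuclideanSpace ℂ (Fin (2 * n)) → EuclideanSpace ℂ (Fin (2 * n)) :=
  fun z => WithLp.toLp 2 fun j =>
    if h : j.val % 2 = 0 then
      (z j - Complex.I * z ⟨j.val + 1, by have := j.isLt; omega⟩) / 2
    else
      (z j + Complex.I * z ⟨j.val - 1, by have := j.isLt; omega⟩) / 2

/-!
Pair the coordinates as `u k = z (2k) - i z (2k+1)` and `v k = z (2k) + i z (2k+1)`. Then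
`‖u‖² + ‖v‖² = 2‖z‖²` and `z • z = ∑ u k v k`, so by Cauchy–Schwarz `z ∈ L_{2n}` forces
`‖u‖² + ‖v‖² < 2` and `(1 - ‖u‖²)(1 - ‖v‖²) > 0`, whence `‖u‖² < 1`. The image `R z` has
coordinates `(u k / 2, i u k / 2)`: it is isotropic, `‖R z‖² = ‖u‖² / 2 < 1 / 2`, and it has the
same `u`, which gives both `R z ∈ L_{2n}` and `R (R z) = R z`.
-/

open Complex

lemma norm_sum_mul_le {ι : Type*} [Fintype ι] (u v : EuclideanSpace ℂ ι) :
    ‖∑ k, u k * v k‖ ≤ ‖u‖ * ‖v‖ := by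
  simp only [EuclideanSpace.norm_eq]
  calc ‖∑ k, u k * v k‖ ≤ ∑ k, ‖u k‖ * ‖v k‖ := by
        simpa only [norm_mul] using norm_sum_le Finset.univ fun k => u k * v k
    _ ≤ _ := Real.sum_mul_le_sqrt_mul_sqrt _ _ _

lemma lt_one_of_add_lt_two_of_add_sub_mul_lt_one {p q : ℝ} (h₁ : p + q < 2)
    (h₂ : p + q - p * q < 1) : p < 1 := by
  nlinarith

lemma mem_lieBall_of_sum_sq_eq_zero {m : ℕ} {w : EuclideanSpace ℂ (Fin m)}
    (hw : ∑ j, w j ^ 2 = 0) (h : 2 * ‖w‖ ^ 2 < 1) : w ∈ lieBall m := by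
  refine ⟨?_, by simpa [hw] using h⟩
  nlinarith [norm_nonneg w]

variable {n : ℕ}

def evenIdx (k : Fin n) : Fin (2 * n) := ⟨2 * k, by omega⟩

def oddIdx (k : Fin n) : Fin (2 * n) := ⟨2 * k + 1, by omega⟩

def finPairEquiv (n : ℕ) : Fin n × Fin 2 ≃ Fin (2 * n) :=
  finProdFinEquiv.trans (finCongr (mul_comm n 2))

lemma finPairEquiv_zero (k : Fin n) : finPairEquiv n (k, 0) = evenIdx k := by
  ext; simp [finPairEquiv, evenIdx]

lemma finPairEquiv_one (k : Fin n) : finPairEquiv n (k, 1) = oddIdx k := by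
  ext
  simp only [finPairEquiv, Equiv.trans_apply, finCongr_apply, Fin.val_cast,
    finProdFinEquiv_apply_val, Fin.coe_ofNat_eq_mod, Nat.mod_succ, oddIdx]
  omega

lemma sum_eq_sum_evenIdx_add_oddIdx {M : Type*} [AddCommMonoid M] (f : Fin (2 * n) → M) :
    ∑ j, f j = ∑ k, (f (evenIdx k) + f (oddIdx k)) := by
  rw [← (finPairEquiv n).sum_comp, Fintype.sum_prod_type]
  simp [Fin.sum_univ_two, finPairEquiv_zero, finPairEquiv_one]

lemma funext_evenIdx_oddIdx {α : Type*} {x y : Fin (2 * n) → α}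
    (heven : ∀ k, x (evenIdx k) = y (evenIdx k)) (hodd : ∀ k, x (oddIdx k) = y (oddIdx k)) :
    x = y := by
  funext j
  obtain ⟨⟨k, b⟩, rfl⟩ := (finPairEquiv n).surjective j
  fin_cases b
  · simpa [finPairEquiv_zero] using heven k
  · simpa [finPairEquiv_one] using hodd k

noncomputable def pairDiff (z : EuclideanSpace ℂ (Fin (2 * n))) : EuclideanSpace ℂ (Fin n) :=
  WithLp.toLp 2 fun k => z (evenIdx k) - I * z (oddIdx k)

noncomputable def pairSum (z : EuclideanSpace ℂ (Fin (2 * n))) : EuclideanSpace ℂ (Fin n) :=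
  WithLp.toLp 2 fun k => z (evenIdx k) + I * z (oddIdx k)

lemma norm_sq_pairDiff_add_norm_sq_pairSum (z : EuclideanSpace ℂ (Fin (2 * n))) :
    ‖pairDiff z‖ ^ 2 + ‖pairSum z‖ ^ 2 = 2 * ‖z‖ ^ 2 := by
  rw [EuclideanSpace.norm_sq_eq, EuclideanSpace.norm_sq_eq, EuclideanSpace.norm_sq_eq,
    sum_eq_sum_evenIdx_add_oddIdx, Finset.mul_sum, ← Finset.sum_add_distrib]
  refine Finset.sum_congr rfl fun k _ => ?_
  simp only [pairDiff, pairSum, PiLp.toLp_apply, Complex.sq_norm, normSq_apply, sub_re, sub_im,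
    add_re, add_im, mul_re, mul_im, I_re, I_im]
  ring

lemma sum_sq_eq_sum_pairDiff_mul_pairSum (z : EuclideanSpace ℂ (Fin (2 * n))) :
    ∑ j, z j ^ 2 = ∑ k, pairDiff z k * pairSum z k := by
  rw [sum_eq_sum_evenIdx_add_oddIdx]
  refine Finset.sum_congr rfl fun k _ => ?_
  simp only [pairDiff, pairSum, PiLp.toLp_apply]
  linear_combination z (oddIdx k) ^ 2 * I_sq

lemma lieRetr_evenIdx (z : EuclideanSpace ℂ (Fin (2 * n))) (k : Fin n) :
    lieRetr n z (evenIdx k) = pairDiff z k / 2 := by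
  simp [lieRetr, evenIdx, pairDiff, oddIdx]

lemma lieRetr_oddIdx (z : EuclideanSpace ℂ (Fin (2 * n))) (k : Fin n) :
    lieRetr n z (oddIdx k) = I * pairDiff z k / 2 := by
  simp only [lieRetr, oddIdx, pairDiff, evenIdx, PiLp.toLp_apply, Nat.add_sub_cancel]
  rw [dif_neg (by omega)]
  linear_combination z ⟨2 * k + 1, by omega⟩ / 2 * I_sq

lemma pairDiff_lieRetr (z : EuclideanSpace ℂ (Fin (2 * n))) :
    pairDiff (lieRetr n z) = pairDiff z := by
  ext k
  change lieRetr n z (evenIdx k) - I * lieRetr n z (oddIdx k) = pairDiff z k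
  rw [lieRetr_evenIdx, lieRetr_oddIdx]
  linear_combination -pairDiff z k / 2 * I_sq

lemma lieRetr_comp_self : lieRetr n ∘ lieRetr n = lieRetr n := by
  funext z
  refine PiLp.ext (funext_iff.1 (funext_evenIdx_oddIdx (fun k => ?_) (fun k => ?_)))
  · simp only [Function.comp_apply, lieRetr_evenIdx, pairDiff_lieRetr]
  · simp only [Function.comp_apply, lieRetr_oddIdx, pairDiff_lieRetr]

lemma norm_sq_lieRetr (z : EuclideanSpace ℂ (Fin (2 * n))) :
    ‖lieRetr n z‖ ^ 2 = ‖pairDiff z‖ ^ 2 / 2 := by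
  rw [EuclideanSpace.norm_sq_eq, EuclideanSpace.norm_sq_eq, sum_eq_sum_evenIdx_add_oddIdx,
    Finset.sum_div]
  refine Finset.sum_congr rfl fun k _ => ?_
  simp only [lieRetr_evenIdx, lieRetr_oddIdx, norm_div, norm_mul, norm_I, one_mul, norm_ofNat]
  ring

lemma sum_sq_lieRetr (z : EuclideanSpace ℂ (Fin (2 * n))) :
    ∑ j, lieRetr n z j ^ 2 = 0 := by
  rw [sum_eq_sum_evenIdx_add_oddIdx]
  refine Finset.sum_eq_zero fun k _ => ?_
  rw [lieRetr_evenIdx, lieRetr_oddIdx]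
  linear_combination pairDiff z k ^ 2 / 4 * I_sq

lemma norm_sq_pairDiff_lt_one {z : EuclideanSpace ℂ (Fin (2 * n))} (hz : z ∈ lieBall (2 * n)) :
    ‖pairDiff z‖ ^ 2 < 1 := by
  obtain ⟨hz_norm, hz_sq⟩ := hz
  have hsum := norm_sq_pairDiff_add_norm_sq_pairSum z
  have hCS : ‖∑ j, z j ^ 2‖ ^ 2 ≤ ‖pairDiff z‖ ^ 2 * ‖pairSum z‖ ^ 2 := by
    rw [← mul_pow, sum_sq_eq_sum_pairDiff_mul_pairSum]
    gcongr
    exact norm_sum_mul_le _ _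
  refine lt_one_of_add_lt_two_of_add_sub_mul_lt_one (q := ‖pairSum z‖ ^ 2) ?_ (by linarith)
  nlinarith [norm_nonneg z]

lemma lieRetr_mapsTo : Set.MapsTo (lieRetr n) (lieBall (2 * n)) (lieBall (2 * n)) := fun z hz =>
  mem_lieBall_of_sum_sq_eq_zero (sum_sq_lieRetr z)
    (by rw [norm_sq_lieRetr]; linarith [norm_sq_pairDiff_lt_one hz])

theorem stmt5 (n : ℕ) :
    Set.MapsTo (lieRetr n) (lieBall (2 * n)) (lieBall (2 * n)) ∧
      lieRetr n ∘ lieRetr n = lieRetr n :=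
  ⟨lieRetr_mapsTo, lieRetr_comp_self⟩
end

section
/- For n ≥ 1, the image of the Lie ball L_{2n} under the map R(z₁,…,z_{2n}) = ((z₁ - i z₂)/2, (z₂+i z₁)/2, …, (z_{2n-1} - i z_{2n})/2, (z_{2n}+i z_{2n-1})/2) equals the set M = {(w₁, i w₁, w₂, i w₂, …, w_n, i w_n) : (w₁,…,w_n) ∈ ℂⁿ, 2(|w₁|² + ⋯ + |w_n|²) < 1/2 ⋅ 1}, which is linearly isomorphic to a Euclidean ball of dimension n. -/
/-!
Split `z ∈ ℂ^{2n}` into the pairs `(a_k, b_k) = (z_{2k}, z_{2k+1})` and set `u_k = a_k - i b_k`,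
`v_k = a_k + i b_k` (`pairMinus z`, `pairPlus z`). Then `lieRetr z` is the isotropic vector
`(u_k / 2, i u_k / 2)_k`, `‖z‖² = (‖u‖² + ‖v‖²) / 2` and `z • z = ∑ u_k v_k`. With `p = ‖u‖²`,
`q = ‖v‖²`, Cauchy–Schwarz turns the Lie ball conditions into `p + q < 2` and `p + q - p q < 1`,
i.e. `(p - 1) (1 - q) < 0`, which forces `p < 1`, that is `4 ‖u / 2‖² < 1`. Conversely an isotropic
vector has `z • z = 0`, is fixed by `lieRetr`, and lies in the Lie ball as soon as `2 ‖z‖² < 1`.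
-/

open Complex

namespace LieBall

lemma sum_fin_two_mul {M : Type*} [AddCommMonoid M] (n : ℕ) (f : Fin (2 * n) → M) :
    ∑ j, f j = ∑ k : Fin n, (f ⟨2 * k, by omega⟩ + f ⟨2 * k + 1, by omega⟩) := by
  rw [← Equiv.sum_comp (finProdFinEquiv.trans (finCongr (Nat.mul_comm n 2))) f,
    Fintype.sum_prod_type]
  refine Finset.sum_congr rfl fun k _ => ?_
  rw [Fin.sum_univ_two]
  congr 1 <;> · congr 1; ext; simp [finProdFinEquiv, add_comm]

lemma fin_two_mul_cases {n : ℕ} (j : Fin (2 * n)) :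
    ∃ k : Fin n, j = ⟨2 * k, by omega⟩ ∨ j = ⟨2 * k + 1, by omega⟩ :=
  ⟨⟨j / 2, by omega⟩, by simp only [Fin.ext_iff]; omega⟩

lemma norm_sum_mul_le {ι : Type*} [Fintype ι] (u v : EuclideanSpace ℂ ι) :
    ‖∑ i, u i * v i‖ ≤ ‖u‖ * ‖v‖ :=
  calc ‖∑ i, u i * v i‖ ≤ ∑ i, ‖u i‖ * ‖v i‖ :=
        (norm_sum_le _ _).trans_eq (by simp only [norm_mul])
    _ ≤ ‖u‖ * ‖v‖ := by
        rw [EuclideanSpace.norm_eq u, EuclideanSpace.norm_eq v]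
        exact Real.sum_mul_le_sqrt_mul_sqrt _ _ _

variable {n : ℕ}

noncomputable def isotropicEmbed (n : ℕ) :
    EuclideanSpace ℂ (Fin n) →ₗ[ℂ] EuclideanSpace ℂ (Fin (2 * n)) where
  toFun w := WithLp.toLp 2 fun j => (if j.val % 2 = 0 then 1 else I) * w ⟨j / 2, by omega⟩
  map_add' u v := by ext j; simp [mul_add]
  map_smul' c u := by ext j; simp [mul_left_comm]

@[simp]
lemma isotropicEmbed_apply_two_mul (w : EuclideanSpace ℂ (Fin n)) (k : Fin n) :
    isotropicEmbed n w ⟨2 * k, by omega⟩ = w k := by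
  simp [isotropicEmbed]

@[simp]
lemma isotropicEmbed_apply_two_mul_add_one (w : EuclideanSpace ℂ (Fin n)) (k : Fin n) :
    isotropicEmbed n w ⟨2 * k + 1, by omega⟩ = I * w k := by
  have hodd : (2 * k.val + 1) % 2 ≠ 0 := by omega
  simp only [isotropicEmbed, LinearMap.coe_mk, AddHom.coe_mk, PiLp.toLp_apply, if_neg hodd]
  exact congrArg (fun i => I * w i) (Fin.ext (by simp; omega))

noncomputable def pairMinus (z : EuclideanSpace ℂ (Fin (2 * n))) : EuclideanSpace ℂ (Fin n) :=
  WithLp.toLp 2 fun k => z ⟨2 * k, by omega⟩ - I * z ⟨2 * k + 1, by omega⟩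

noncomputable def pairPlus (z : EuclideanSpace ℂ (Fin (2 * n))) : EuclideanSpace ℂ (Fin n) :=
  WithLp.toLp 2 fun k => z ⟨2 * k, by omega⟩ + I * z ⟨2 * k + 1, by omega⟩

lemma pairMinus_isotropicEmbed (w : EuclideanSpace ℂ (Fin n)) :
    pairMinus (isotropicEmbed n w) = (2 : ℂ) • w := by
  ext k
  simp only [pairMinus, isotropicEmbed_apply_two_mul, isotropicEmbed_apply_two_mul_add_one,
    PiLp.toLp_apply, PiLp.smul_apply, smul_eq_mul]
  linear_combination -w k * I_sq

lemma pairPlus_isotropicEmbed (w : EuclideanSpace ℂ (Fin n)) :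
    pairPlus (isotropicEmbed n w) = 0 := by
  ext k
  simp only [pairPlus, isotropicEmbed_apply_two_mul, isotropicEmbed_apply_two_mul_add_one,
    PiLp.toLp_apply, PiLp.zero_apply]
  linear_combination w k * I_sq

lemma isotropicEmbed_injective : Function.Injective (isotropicEmbed n) := fun u v h => by
  simpa [pairMinus_isotropicEmbed] using congrArg pairMinus h

lemma lieRetr_eq_isotropicEmbed (z : EuclideanSpace ℂ (Fin (2 * n))) :
    lieRetr n z = isotropicEmbed n ((2 : ℂ)⁻¹ • pairMinus z) := by
  ext j
  obtain ⟨k, rfl | rfl⟩ := fin_two_mul_cases j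
  · simp only [lieRetr, Nat.mul_mod_right, ↓reduceDIte, pairMinus, map_smul, PiLp.smul_apply,
      isotropicEmbed_apply_two_mul, smul_eq_mul]
    ring
  · simp only [lieRetr, Nat.add_mod, Nat.mul_mod_right, Nat.mod_succ, zero_add, one_ne_zero,
      ↓reduceDIte, add_tsub_cancel_right, pairMinus, map_smul, PiLp.smul_apply,
      isotropicEmbed_apply_two_mul_add_one, smul_eq_mul]
    linear_combination z ⟨2 * k + 1, by omega⟩ / 2 * I_sq

lemma lieRetr_isotropicEmbed (w : EuclideanSpace ℂ (Fin n)) :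
    lieRetr n (isotropicEmbed n w) = isotropicEmbed n w := by
  rw [lieRetr_eq_isotropicEmbed, pairMinus_isotropicEmbed, smul_smul, inv_mul_cancel₀ two_ne_zero,
    one_smul]

lemma norm_sq_eq_pairMinus_pairPlus (z : EuclideanSpace ℂ (Fin (2 * n))) :
    ‖z‖ ^ 2 = (‖pairMinus z‖ ^ 2 + ‖pairPlus z‖ ^ 2) / 2 := by
  simp only [EuclideanSpace.norm_sq_eq, pairMinus, pairPlus]
  rw [sum_fin_two_mul, ← Finset.sum_add_distrib, Finset.sum_div]
  refine Finset.sum_congr rfl fun k _ => ?_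
  have := parallelogram_law_with_norm ℂ (z ⟨2 * k, by omega⟩) (I * z ⟨2 * k + 1, by omega⟩)
  simp only [norm_mul, norm_I, one_mul] at this
  linarith

lemma sum_sq_eq_pairMinus_mul_pairPlus (z : EuclideanSpace ℂ (Fin (2 * n))) :
    ∑ j, z j ^ 2 = ∑ k, pairMinus z k * pairPlus z k := by
  rw [sum_fin_two_mul]
  refine Finset.sum_congr rfl fun k _ => ?_
  simp only [pairMinus, pairPlus, PiLp.toLp_apply]
  linear_combination z ⟨2 * k + 1, by omega⟩ ^ 2 * I_sq

lemma norm_pairMinus_sq_lt_one {z : EuclideanSpace ℂ (Fin (2 * n))} (hz : z ∈ lieBall (2 * n)) :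
    ‖pairMinus z‖ ^ 2 < 1 := by
  obtain ⟨hnorm, hlie⟩ := hz
  set p := ‖pairMinus z‖ ^ 2
  set q := ‖pairPlus z‖ ^ 2
  have hz2 : ‖z‖ ^ 2 = (p + q) / 2 := norm_sq_eq_pairMinus_pairPlus z
  have hcs : ‖∑ j, z j ^ 2‖ ^ 2 ≤ p * q := by
    rw [sum_sq_eq_pairMinus_mul_pairPlus]
    exact (pow_le_pow_left₀ (norm_nonneg _) (norm_sum_mul_le _ _) 2).trans_eq (mul_pow _ _ _)
  have hpq : p + q < 2 := by nlinarith [norm_nonneg z]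
  have hkey : (p - 1) * (1 - q) < 0 := by linarith
  by_contra! hp
  linarith [mul_nonneg (sub_nonneg.2 hp) (by linarith : (0 : ℝ) ≤ 1 - q)]

lemma isotropicEmbed_mem_lieBall {w : EuclideanSpace ℂ (Fin n)} (hw : 4 * ‖w‖ ^ 2 < 1) :
    isotropicEmbed n w ∈ lieBall (2 * n) := by
  have hnorm : ‖isotropicEmbed n w‖ ^ 2 = 2 * ‖w‖ ^ 2 := by
    rw [norm_sq_eq_pairMinus_pairPlus, pairMinus_isotropicEmbed, pairPlus_isotropicEmbed,
      norm_smul, norm_zero, Complex.norm_ofNat]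
    ring
  have hiso : ∑ j, isotropicEmbed n w j ^ 2 = 0 := by
    simp [sum_sq_eq_pairMinus_mul_pairPlus, pairPlus_isotropicEmbed]
  refine ⟨?_, ?_⟩
  · nlinarith [norm_nonneg (isotropicEmbed n w)]
  · rw [hiso, hnorm, norm_zero]
    linarith

end LieBall

open LieBall in
theorem stmt6 (n : ℕ) :
    ∃ T : EuclideanSpace ℂ (Fin n) →ₗ[ℂ] EuclideanSpace ℂ (Fin (2 * n)),
      Function.Injective T ∧
      (∀ (w : EuclideanSpace ℂ (Fin n)) (k : Fin n),
        T w ⟨2 * k.val, by have := k.isLt; omega⟩ = w k ∧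
        T w ⟨2 * k.val + 1, by have := k.isLt; omega⟩ = Complex.I * w k) ∧
      lieRetr n '' lieBall (2 * n) =
        {z | ∃ w : EuclideanSpace ℂ (Fin n),
          2 * (∑ k, ‖w k‖ ^ 2) < 1 / 2 ∧ z = T w} := by
  refine ⟨isotropicEmbed n, isotropicEmbed_injective, fun w k => ⟨by simp, by simp⟩, ?_⟩
  ext z
  simp only [← EuclideanSpace.norm_sq_eq, Set.mem_image, Set.mem_ofPred_eq]
  constructor
  · rintro ⟨z, hz, rfl⟩
    refine ⟨(2 : ℂ)⁻¹ • pairMinus z, ?_, lieRetr_eq_isotropicEmbed z⟩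
    have := norm_pairMinus_sq_lt_one hz
    rw [norm_smul, mul_pow, norm_inv, Complex.norm_ofNat]
    linarith
  · rintro ⟨w, hw, rfl⟩
    exact ⟨isotropicEmbed n w, isotropicEmbed_mem_lieBall (by linarith), lieRetr_isotropicEmbed w⟩
end

section
/- Let K = {z ∈ ℂ³ : max(|z₁| + |z₃|, |z₂| + |z₃|) ≤ 1} and let R : ℂ³ → ℂ³ be a linear map with R(K) ⊆ K, R(1,t,0) = (1,t,0) for some t ∈ [0,1], and write R(1,0,0) = (α₁,α₂,α₃), R(0,1,0) = (β₁,β₂,β₃). Then α₃ = 0 and β₃ = 0; i.e., R maps ℂ² × {0} into ℂ² × {0}. -/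
/-!
Write `β = R(0,1,0)`. Since `R` fixes `(1,t,0)`, on the line `z ↦ (1,z,0)` the first and third
coordinates of `R` are `1 + (z - t) β₁` and `(z - t) β₃`, and their moduli add up to at most `1`
whenever `|z| ≤ 1`. Move `z` from `t` to the two conjugate points `t + (v - 1)/2`,
`t + (v̄ - 1)/2` of a circle of radius `1/2` through `t` inside the unit disc (`|v| = 1`).
The first coordinates average to `1 - |v - 1|² β₁ / 4`, so, as `|β₁| ≤ 1` because `β ∈ K`,
their moduli sum to at least `2 - |v - 1|²/2`, while each third coordinate has modulus
`|v - 1| |β₃| / 2`. Hence `|β₃| ≤ |v - 1| / 2`, and letting `v → 1` gives `β₃ = 0`, then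
`R(1,0,0)₃ = -t β₃ = 0`.
-/

open ComplexConjugate Set

namespace Complex

lemma exists_norm_eq_one_norm_sub_one_eq {B : ℝ} (hB0 : 0 ≤ B) (hB2 : B ≤ 2) :
    ∃ v : ℂ, ‖v‖ = 1 ∧ ‖v - 1‖ = B := by
  set s := Real.sqrt (1 - B ^ 2 / 4)
  have hs : s ^ 2 = 1 - B ^ 2 / 4 := Real.sq_sqrt (by nlinarith)
  refine ⟨⟨1 - B ^ 2 / 2, B * s⟩, ?_, ?_⟩
  · rw [norm_def, normSq_mk, show (1 - B ^ 2 / 2) * (1 - B ^ 2 / 2) + B * s * (B * s) = 1 by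
      linear_combination B ^ 2 * hs, Real.sqrt_one]
  · rw [show (⟨1 - B ^ 2 / 2, B * s⟩ - 1 : ℂ) = ⟨-(B ^ 2 / 2), B * s⟩ by
        apply Complex.ext <;> simp,
      norm_def, normSq_mk, show -(B ^ 2 / 2) * -(B ^ 2 / 2) + B * s * (B * s) = B ^ 2 by
      linear_combination B ^ 2 * hs, Real.sqrt_sq hB0]

lemma sub_one_add_conj_sub_one {v : ℂ} (hv : ‖v‖ = 1) :
    (v - 1) + conj (v - 1) = -(‖v - 1‖ : ℂ) ^ 2 := by
  have hvv : v * conj v = 1 := by rw [mul_conj, normSq_eq_norm_sq, hv]; simp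
  rw [← ofReal_pow, Complex.sq_norm, ← mul_conj, map_sub, map_one]
  linear_combination hvv

lemma norm_add_sub_one_div_two_le_one {t : ℝ} (ht : t ∈ Icc 0 1) {v : ℂ} (hv : ‖v‖ = 1) :
    ‖(t : ℂ) + (v - 1) / 2‖ ≤ 1 := by
  have hrad : |t - 1 / 2| ≤ 1 / 2 := abs_le.mpr ⟨by linarith [ht.1], by linarith [ht.2]⟩
  calc ‖(t : ℂ) + (v - 1) / 2‖ = ‖((t - 1 / 2 : ℝ) : ℂ) + v / 2‖ := by push_cast; ring_nf
    _ ≤ |t - 1 / 2| + 1 / 2 := by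
      refine (norm_add_le _ _).trans_eq ?_
      rw [norm_real, Real.norm_eq_abs, norm_div, hv, Complex.norm_two]
    _ ≤ 1 := by linarith

section AffinePair

variable {t : ℝ} {b d : ℂ}

lemma norm_sub_one_mul_norm_le_of_forall_norm_add_norm_le_one (ht : t ∈ Icc 0 1)
    (hb : ‖b‖ ≤ 1) (H : ∀ z : ℂ, ‖z‖ ≤ 1 → ‖1 + (z - t) * b‖ + ‖(z - t) * d‖ ≤ 1)
    {v : ℂ} (hv : ‖v‖ = 1) :
    ‖v - 1‖ * ‖d‖ ≤ ‖v - 1‖ ^ 2 / 2 := by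
  have h₁ := H _ (norm_add_sub_one_div_two_le_one ht hv)
  have h₂ := H ((t : ℂ) + conj (v - 1) / 2) (by
    simpa only [map_sub, map_one] using norm_add_sub_one_div_two_le_one ht ((norm_conj v).trans hv))
  simp only [add_sub_cancel_left, norm_mul, norm_div, norm_conj, Complex.norm_two] at h₁ h₂
  set c : ℂ := (‖v - 1‖ : ℂ) ^ 2 / 2 * b
  have hsum : (1 + (v - 1) / 2 * b) + (1 + conj (v - 1) / 2 * b) + c = 2 := by
    linear_combination b / 2 * sub_one_add_conj_sub_one hv
  have hc : ‖c‖ ≤ ‖v - 1‖ ^ 2 / 2 := by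
    simp only [c, norm_mul, norm_div, norm_pow, norm_real, Real.norm_eq_abs, abs_norm,
      Complex.norm_two]
    exact mul_le_of_le_one_right (by positivity) hb
  have htri : (2 : ℝ) ≤ ‖1 + (v - 1) / 2 * b‖ + ‖1 + conj (v - 1) / 2 * b‖ + ‖c‖ := by
    calc (2 : ℝ) = ‖(1 + (v - 1) / 2 * b) + (1 + conj (v - 1) / 2 * b) + c‖ := by
          rw [hsum, Complex.norm_two]
      _ ≤ _ := (norm_add_le _ _).trans (by gcongr; exact norm_add_le _ _)
  linarith

lemma eq_zero_of_forall_norm_add_norm_le_one (ht : t ∈ Icc 0 1) (hb : ‖b‖ ≤ 1)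
    (H : ∀ z : ℂ, ‖z‖ ≤ 1 → ‖1 + (z - t) * b‖ + ‖(z - t) * d‖ ≤ 1) : d = 0 := by
  have hd1 : ‖d‖ ≤ 1 := by
    have := norm_sub_one_mul_norm_le_of_forall_norm_add_norm_le_one ht hb H
      (v := -1) (by simp)
    norm_num at this
    linarith
  obtain ⟨v, hv, hvd⟩ := exists_norm_eq_one_norm_sub_one_eq (norm_nonneg d) (by linarith)
  have := norm_sub_one_mul_norm_le_of_forall_norm_add_norm_le_one ht hb H hv
  rw [hvd] at this
  exact norm_eq_zero.mp (by nlinarith [norm_nonneg d])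

end AffinePair

end Complex

theorem stmt11
    (K : Set (ℂ × ℂ × ℂ))
    (hK : K = {z : ℂ × ℂ × ℂ |
      max (‖z.1‖ + ‖z.2.2‖)
        (‖z.2.1‖ + ‖z.2.2‖) ≤ 1})
    (R : (ℂ × ℂ × ℂ) →ₗ[ℂ] (ℂ × ℂ × ℂ))
    (hmaps : Set.MapsTo R K K)
    (t : ℝ) (ht : t ∈ Set.Icc (0 : ℝ) 1)
    (hfix : R (1, (t : ℂ), 0) = (1, (t : ℂ), 0)) :
    (R (1, 0, 0)).2.2 = 0 ∧ (R (0, 1, 0)).2.2 = 0 := by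
  subst hK
  set β := R (0, 1, 0)
  have hline (z : ℂ) : R (1, z, 0) = (1, (t : ℂ), 0) + (z - t) • β := by
    rw [← hfix, ← map_smul, ← map_add]
    congr 1
    ext <;> simp
  have hβ : ‖β.1‖ ≤ 1 := by
    have := hmaps (x := (0, 1, 0)) (by simp)
    simp only [mem_ofPred_eq, max_le_iff] at this
    linarith [this.1, norm_nonneg β.2.2]
  have hdisc (z : ℂ) (hz : ‖z‖ ≤ 1) : ‖1 + (z - t) * β.1‖ + ‖(z - t) * β.2.2‖ ≤ 1 := by
    have := hmaps (x := (1, z, 0)) (by simpa using hz)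
    simp only [mem_ofPred_eq, max_le_iff, hline] at this
    simpa using this.1
  have hβ₃ : β.2.2 = 0 := Complex.eq_zero_of_forall_norm_add_norm_le_one ht hβ hdisc
  refine ⟨?_, hβ₃⟩
  simpa [hβ₃] using congrArg (·.2.2) (hline 0)
end

section
/- Let K = {z ∈ ℂ³ : max(|z₁|+|z₃|, |z₂|+|z₃|) ≤ 1} and let R : ℂ³ → ℂ³ be a ℂ-linear map with R(K) ⊆ K, R ∘ R = R, whose image V = R(ℂ³) is two-dimensional and not equal to ℂ² × {0}, with R(ℂ²×{0}) ⊆ ℂ²×{0} and V ∩ ({0}×ℂ²) containing a vector (0,γ₂,γ₃) with γ₃ ≠ 0. Then R(0,0,1) = (0,0,1). -/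
/-! R fixes (0, γ₂, γ₃) = γ₂ e₂ + γ₃ e₃ and keeps the third coordinate of R e₂ at 0, so comparing
third coordinates gives (R e₃)₃ = 1. The only point of K with third coordinate 1 is e₃. -/

theorem Prod.eq_zero_zero_one_of_max_norm_add_le_one {𝕜 : Type*} [NormedRing 𝕜] [NormOneClass 𝕜]
    {z : 𝕜 × 𝕜 × 𝕜} (hz : max (‖z.1‖ + ‖z.2.2‖) (‖z.2.1‖ + ‖z.2.2‖) ≤ 1) (h3 : z.2.2 = 1) :
    z = (0, 0, 1) := by
  rw [h3, norm_one, max_le_iff] at hz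
  have h1 : ‖z.1‖ = 0 := le_antisymm (by linarith [hz.1]) (norm_nonneg _)
  have h2 : ‖z.2.1‖ = 0 := le_antisymm (by linarith [hz.2]) (norm_nonneg _)
  exact Prod.ext (norm_eq_zero.mp h1) (Prod.ext (norm_eq_zero.mp h2) h3)

theorem LinearMap.snd_snd_apply_zero_zero_one {𝕜 : Type*} [Field 𝕜]
    (R : (𝕜 × 𝕜 × 𝕜) →ₗ[𝕜] (𝕜 × 𝕜 × 𝕜))
    (hR : Set.MapsTo R {z : 𝕜 × 𝕜 × 𝕜 | z.2.2 = 0} {z : 𝕜 × 𝕜 × 𝕜 | z.2.2 = 0})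
    {γ₂ γ₃ : 𝕜} (hγ₃ : γ₃ ≠ 0) (hfix : R (0, γ₂, γ₃) = (0, γ₂, γ₃)) :
    (R (0, 0, 1)).2.2 = 1 := by
  have hdecomp : ((0 : 𝕜), γ₂, γ₃) = γ₂ • ((0 : 𝕜), (1 : 𝕜), (0 : 𝕜)) + γ₃ • (0, 0, 1) := by
    simp
  have he₂ : (R (0, 1, 0)).2.2 = 0 := hR (by simp)
  have h := congrArg (fun z : 𝕜 × 𝕜 × 𝕜 => z.2.2) hfix
  rw [hdecomp, map_add, map_smul, map_smul] at h
  simp only [Prod.snd_add, Prod.smul_snd, smul_eq_mul, he₂, mul_zero, zero_add,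
    mul_one] at h
  exact mul_left_cancel₀ hγ₃ (h.trans (mul_one γ₃).symm)

theorem stmt12_general
    (K : Set (ℂ × ℂ × ℂ))
    (hK : K = {z : ℂ × ℂ × ℂ |
      max (‖z.1‖ + ‖z.2.2‖)
        (‖z.2.1‖ + ‖z.2.2‖) ≤ 1})
    (R : (ℂ × ℂ × ℂ) →ₗ[ℂ] (ℂ × ℂ × ℂ))
    (hmaps : Set.MapsTo R K K)
    (hidem : ∀ z, R (R z) = R z)
    (hC2 : Set.MapsTo R {z : ℂ × ℂ × ℂ | z.2.2 = 0} {z : ℂ × ℂ × ℂ | z.2.2 = 0})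
    (γ₂ γ₃ : ℂ) (hγ₃ : γ₃ ≠ 0)
    (hmem : ((0 : ℂ), γ₂, γ₃) ∈ LinearMap.range R) :
    R (0, 0, 1) = (0, 0, 1) := by
  subst hK
  obtain ⟨w, hw⟩ := hmem
  have hfix : R (0, γ₂, γ₃) = (0, γ₂, γ₃) := by rw [← hw, hidem]
  have hR₃ := hmaps (x := (0, 0, 1)) (by simp)
  exact Prod.eq_zero_zero_one_of_max_norm_add_le_one hR₃
    (R.snd_snd_apply_zero_zero_one hC2 hγ₃ hfix)

theorem stmt12
    (K : Set (ℂ × ℂ × ℂ))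
    (hK : K = {z : ℂ × ℂ × ℂ |
      max (‖z.1‖ + ‖z.2.2‖)
        (‖z.2.1‖ + ‖z.2.2‖) ≤ 1})
    (R : (ℂ × ℂ × ℂ) →ₗ[ℂ] (ℂ × ℂ × ℂ))
    (hmaps : Set.MapsTo R K K)
    (hidem : ∀ z, R (R z) = R z)
    (hdim : Module.finrank ℂ (LinearMap.range R) = 2)
    (hne : (LinearMap.range R : Set (ℂ × ℂ × ℂ)) ≠ {z : ℂ × ℂ × ℂ | z.2.2 = 0})
    (hC2 : Set.MapsTo R {z : ℂ × ℂ × ℂ | z.2.2 = 0} {z : ℂ × ℂ × ℂ | z.2.2 = 0})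
    (γ₂ γ₃ : ℂ) (hγ₃ : γ₃ ≠ 0)
    (hmem : ((0 : ℂ), γ₂, γ₃) ∈ LinearMap.range R) :
    R (0, 0, 1) = (0, 0, 1) :=
  stmt12_general K hK R hmaps hidem hC2 γ₂ γ₃ hγ₃ hmem
end

section
/- The map R(z₁,z₂,z₃) = ((z₁+z₂)/2, (z₁+z₂)/2, z₃) maps the tetrablock 𝔼 into itself, satisfies R ∘ R = R, and its image equals {(s/2, s/2, p) : (s,p) ∈ 𝔾₂}, where 𝔾₂ is the symmetrized bidisc. -/
/-- `2 × 2` symmetric complex matrices with largest singular value `< 1`. -/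
def RIII2 : Set (Matrix (Fin 2) (Fin 2) ℂ) :=
  {A | A.IsSymm ∧ ∀ x : Fin 2 → ℂ, (∑ i, ‖x i‖ ^ 2) = 1 →
    ∑ i, ‖A.mulVec x i‖ ^ 2 < 1}

def Lam (A : Matrix (Fin 2) (Fin 2) ℂ) : ℂ × ℂ × ℂ :=
  (A 0 0, A 1 1, A 0 0 * A 1 1 - (A 0 1) ^ 2)

/-- The tetrablock. -/
def tetrablock : Set (ℂ × ℂ × ℂ) := Lam '' RIII2

/-- The symmetrized bidisc. -/
def symBidisc : Set (ℂ × ℂ) :=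
  {w | ∃ lam mu : ℂ, ‖lam‖ < 1 ∧ ‖mu‖ < 1 ∧
    w = (lam + mu, lam * mu)}

/-!
A point of the tetrablock is `Λ(A)` with `A` a symmetric strict contraction, and then
`(a₁₁ + a₂₂, a₁₁a₂₂ - a₁₂²) = (tr A, det A)` lies in `𝔾₂` because the eigenvalues of a strict
contraction lie in the disc. Conversely, for `λ, μ ∈ 𝔻` the matrix
`½ [[λ + μ, λ - μ], [λ - μ, λ + μ]]`, which is `diag(λ, μ)` conjugated by a real orthogonal
matrix, is a symmetric strict contraction with `Λ = ((λ + μ)/2, (λ + μ)/2, λμ)`. Hence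
`R(𝔼) = {(s/2, s/2, p) : (s, p) ∈ 𝔾₂} ⊆ 𝔼`, and `R` fixes these points.
-/

open Matrix Polynomial

theorem exists_add_eq_and_mul_eq {k : Type*} [Field k] [IsAlgClosed k] (s p : k) :
    ∃ l m : k, l + m = s ∧ l * m = p := by
  obtain ⟨l, hl⟩ := IsAlgClosed.exists_root (C 1 * X ^ 2 + C (-s) * X + C p)
    (by rw [degree_quadratic one_ne_zero]; decide)
  refine ⟨l, s - l, by ring, ?_⟩
  simp only [IsRoot, eval_add, eval_mul, eval_C, eval_pow, eval_X] at hl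
  linear_combination -hl

section Contraction

variable {n : Type*} [Fintype n]

theorem sum_norm_sq_smul (c : ℂ) (v : n → ℂ) :
    ∑ i, ‖(c • v) i‖ ^ 2 = ‖c‖ ^ 2 * ∑ i, ‖v i‖ ^ 2 := by
  simp only [Pi.smul_apply, smul_eq_mul, norm_mul, mul_pow, Finset.mul_sum]

theorem norm_lt_one_of_mulVec_eq_smul {A : Matrix n n ℂ}
    (hA : ∀ x : n → ℂ, ∑ i, ‖x i‖ ^ 2 = 1 → ∑ i, ‖(A *ᵥ x) i‖ ^ 2 < 1)
    {t : ℂ} {x : n → ℂ} (hx : x ≠ 0) (hAx : A *ᵥ x = t • x) : ‖t‖ < 1 := by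
  set S := ∑ i, ‖x i‖ ^ 2
  have hS : 0 < S := by
    obtain ⟨i, hi⟩ := Function.ne_iff.1 hx
    exact (pow_pos (norm_pos_iff.2 hi) 2).trans_le
      (Finset.single_le_sum (f := fun j => ‖x j‖ ^ 2) (fun j _ => by positivity)
        (Finset.mem_univ i))
  set c : ℂ := Complex.ofReal (√S)⁻¹
  have hc : ‖c‖ ^ 2 * S = 1 := by
    rw [Complex.norm_real, Real.norm_eq_abs, sq_abs, inv_pow, Real.sq_sqrt hS.le,
      inv_mul_cancel₀ hS.ne']
  have hunit := hA (c • x) (by rw [sum_norm_sq_smul, hc])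
  rw [mulVec_smul, hAx, smul_comm, sum_norm_sq_smul, sum_norm_sq_smul, hc, mul_one] at hunit
  exact (sq_lt_one_iff₀ (norm_nonneg t)).1 hunit

theorem norm_lt_one_of_det_eq_zero [DecidableEq n] {A : Matrix n n ℂ}
    (hA : ∀ x : n → ℂ, ∑ i, ‖x i‖ ^ 2 = 1 → ∑ i, ‖(A *ᵥ x) i‖ ^ 2 < 1)
    {t : ℂ} (ht : (t • 1 - A).det = 0) : ‖t‖ < 1 := by
  obtain ⟨x, hx, hx0⟩ := exists_mulVec_eq_zero_iff.2 ht
  rw [sub_mulVec, smul_mulVec, one_mulVec, sub_eq_zero] at hx0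
  exact norm_lt_one_of_mulVec_eq_smul hA hx hx0.symm

end Contraction

theorem mem_symBidisc_of_mem_RIII2 {A : Matrix (Fin 2) (Fin 2) ℂ} (hA : A ∈ RIII2) :
    (A 0 0 + A 1 1, A 0 0 * A 1 1 - A 0 1 ^ 2) ∈ symBidisc := by
  obtain ⟨l, m, hs, hp⟩ := exists_add_eq_and_mul_eq (A 0 0 + A 1 1) (A 0 0 * A 1 1 - A 0 1 ^ 2)
  have hdet : ∀ t : ℂ, (t • 1 - A).det = (t - l) * (t - m) := by
    intro t
    simp only [det_fin_two, Matrix.sub_apply, Matrix.smul_apply, one_apply_eq,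
      one_apply_ne Fin.zero_ne_one, one_apply_ne Fin.zero_ne_one.symm, smul_eq_mul, hA.1.apply 0 1]
    linear_combination hs * t - hp
  exact ⟨l, m, norm_lt_one_of_det_eq_zero hA.2 (by rw [hdet]; ring),
    norm_lt_one_of_det_eq_zero hA.2 (by rw [hdet]; ring), by rw [hs, hp]⟩

theorem add_mem_symBidisc_of_mem_tetrablock {z : ℂ × ℂ × ℂ} (hz : z ∈ tetrablock) :
    (z.1 + z.2.1, z.2.2) ∈ symBidisc := by
  obtain ⟨A, hA, rfl⟩ := hz
  exact mem_symBidisc_of_mem_RIII2 hA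

theorem halfSumDiff_mem_RIII2 {l m : ℂ} (hl : ‖l‖ < 1) (hm : ‖m‖ < 1) :
    !![(l + m) / 2, (l - m) / 2; (l - m) / 2, (l + m) / 2] ∈ RIII2 := by
  set B := !![(l + m) / 2, (l - m) / 2; (l - m) / 2, (l + m) / 2] with hB
  refine ⟨?_, fun x hx => ?_⟩
  · ext i j
    fin_cases i <;> fin_cases j <;> rfl
  set u := x 0 + x 1
  set v := x 0 - x 1
  have hBx : ∑ i, ‖(B *ᵥ x) i‖ ^ 2
      = (‖l‖ ^ 2 * ‖u‖ ^ 2 + ‖m‖ ^ 2 * ‖v‖ ^ 2) / 2 := by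
    have h := parallelogram_law_with_norm ℝ (l * u / 2) (m * v / 2)
    simp only [norm_div, norm_mul, RCLike.norm_ofNat, div_pow, mul_pow] at h
    have h0 : (B *ᵥ x) 0 = l * u / 2 + m * v / 2 := by
      simp only [hB, mulVec, dotProduct, Fin.sum_univ_two, of_apply, cons_val', cons_val_zero,
        cons_val_one, cons_val_fin_one, u, v]
      ring
    have h1 : (B *ᵥ x) 1 = l * u / 2 - m * v / 2 := by
      simp only [hB, mulVec, dotProduct, Fin.sum_univ_two, of_apply, cons_val', cons_val_zero,
        cons_val_one, cons_val_fin_one, u, v]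
      ring
    rw [Fin.sum_univ_two, h0, h1, h]
    ring
  have huv : ‖u‖ ^ 2 + ‖v‖ ^ 2 = 2 := by
    rw [parallelogram_law_with_norm ℝ, ← Fin.sum_univ_two (fun i => ‖x i‖ ^ 2), hx, mul_one]
  have hpos : 0 < ‖u‖ ^ 2 ∨ 0 < ‖v‖ ^ 2 := by
    by_contra! h
    linarith [sq_nonneg ‖u‖, sq_nonneg ‖v‖]
  rw [hBx]
  have hl2 : ‖l‖ ^ 2 < 1 := (sq_lt_one_iff₀ (norm_nonneg l)).2 hl
  have hm2 : ‖m‖ ^ 2 < 1 := (sq_lt_one_iff₀ (norm_nonneg m)).2 hm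
  rcases hpos with h | h <;> nlinarith [sq_nonneg ‖u‖, sq_nonneg ‖v‖]

theorem mem_tetrablock_of_mem_symBidisc {s p : ℂ} (h : (s, p) ∈ symBidisc) :
    (s / 2, s / 2, p) ∈ tetrablock := by
  obtain ⟨l, m, hl, hm, hsp⟩ := h
  obtain ⟨rfl, rfl⟩ := Prod.mk.inj hsp
  refine ⟨_, halfSumDiff_mem_RIII2 hl hm, ?_⟩
  simp only [Lam, of_apply, cons_val', cons_val_zero, cons_val_one, empty_val',
    cons_val_fin_one]
  congr 2
  ring

theorem stmt15 :
    let R : ℂ × ℂ × ℂ → ℂ × ℂ × ℂ :=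
      fun z => ((z.1 + z.2.1) / 2, (z.1 + z.2.1) / 2, z.2.2)
    Set.MapsTo R tetrablock tetrablock ∧ R ∘ R = R ∧
      R '' tetrablock =
        {w : ℂ × ℂ × ℂ | ∃ s p : ℂ, (s, p) ∈ symBidisc ∧ w = (s / 2, s / 2, p)} := by
  intro R
  have hRR : ∀ s p : ℂ, R (s / 2, s / 2, p) = (s / 2, s / 2, p) := fun s p => by
    simp only [R, add_halves]
  refine ⟨fun z hz => mem_tetrablock_of_mem_symBidisc (add_mem_symBidisc_of_mem_tetrablock hz),
    funext fun z => hRR _ _, Set.ext fun w => ⟨?_, ?_⟩⟩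
  · rintro ⟨z, hz, rfl⟩
    exact ⟨_, _, add_mem_symBidisc_of_mem_tetrablock hz, rfl⟩
  · rintro ⟨s, p, hsp, rfl⟩
    exact ⟨_, mem_tetrablock_of_mem_symBidisc hsp, hRR s p⟩
end
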